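/- Let X be a locally compact Hausdorff space with a continuous proper G-action, let π : C₀(X) → B(H) be a nondegenerate covariant representation on the G-Hilbert space H, and let T ∈ B(H) be such that for every φ ∈ C₀(X) the map g ↦ [π(g·φ), T] belongs to C₀(G, K(H)). Then for every φ ∈ C₀(X) the map g ↦ [π(φ), u_g T u_g⁻¹] also belongs to C₀(G, K(H)). -/

import Mathlib

/-!
Covariance turns the commutator into a conjugate of the hypothesis,
`[π φ, u_g T u_g⁻¹] = u_g [π (g⁻¹ • φ), T] u_g⁻¹`. Conjugation by a unitary preserves norms and
compactness, and inversion preserves the cocompact filter, so only norm continuity needs an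
argument. A bounded strongly continuous family of operators is equicontinuous, hence converges
uniformly on compact sets; so `g ↦ u_g K` is norm continuous for compact `K`. On the right,
`K u_g* = (u_g K*)*`, and `K*` is compact by Schauder's theorem.
-/

open scoped ZeroAtInfty
open Filter MeasureTheory Topology

noncomputable section

variable {G : Type*} [Group G] [TopologicalSpace G] [IsTopologicalGroup G]
  [LocallyCompactSpace G] [SecondCountableTopology G] [T2Space G]
variable {X : Type*} [TopologicalSpace X] [LocallyCompactSpace X] [T2Space X]
variable [MulAction G X] [ContinuousSMul G X]
variable {H : Type*} [NormedAddCommGroup H] [InnerProductSpace ℂ H] [CompleteSpace H]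
  [SecondCountableTopology H]

/-- The translation action of `G` on `C₀(X, ℂ)`: `(g • φ)(x) = φ(g⁻¹ • x)`. -/
def C0smul (g : G) (φ : C₀(X, ℂ)) : C₀(X, ℂ) where
  toFun := fun x => φ (g⁻¹ • x)
  continuous_toFun := φ.continuous.comp (continuous_const_smul g⁻¹)
  zero_at_infty' := φ.zero_at_infty'.comp
    ((Homeomorph.smul (g⁻¹ : G)).toCocompactMap.cocompact_tendsto')

/-- Conjugation `g(T) = u_g T u_g⁻¹` by the unitary representation `u`. -/
def conjU (u : G →* unitary (H →L[ℂ] H)) (g : G) (T : H →L[ℂ] H) : H →L[ℂ] H :=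
  (u g : H →L[ℂ] H) * T * ((u g⁻¹ : unitary (H →L[ℂ] H)) : H →L[ℂ] H)

/-- Membership in `C₀(G, K(H))`: norm-continuous, compact-operator valued, and
norm vanishing along the cocompact filter on `G`. -/
def InC0GK (f : G → (H →L[ℂ] H)) : Prop :=
  Continuous f ∧ (∀ g, IsCompactOperator (⇑(f g))) ∧
    Tendsto (fun g => ‖f g‖) (cocompact G) (𝓝 0)
theorem totallyBounded_image_of_forall_dist_lt {α β γ : Type*} [PseudoMetricSpace β]
    [PseudoMetricSpace γ] {s : Set α} {f : α → β} {g : α → γ} (hg : TotallyBounded (g '' s))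
    (hfg : ∀ ε > 0, ∃ δ > 0, ∀ x ∈ s, ∀ y ∈ s, dist (g x) (g y) < δ → dist (f x) (f y) < ε) :
    TotallyBounded (f '' s) := by
  rw [Metric.totallyBounded_iff]
  intro ε hε
  obtain ⟨δ, hδ, hδε⟩ := hfg ε hε
  obtain ⟨t, hts, htfin, hcover⟩ := Metric.finite_approx_of_totallyBounded hg δ hδ
  obtain ⟨u, hus, hufin, rfl⟩ := Set.exists_subset_image_finite_and.mp ⟨t, hts, htfin, rfl⟩
  refine ⟨f '' u, hufin.image f, ?_⟩
  rintro _ ⟨x, hxs, rfl⟩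
  obtain ⟨_, ⟨y, hyu, rfl⟩, hxy⟩ := Set.mem_iUnion₂.mp (hcover ⟨x, hxs, rfl⟩)
  exact Set.mem_biUnion (Set.mem_image_of_mem f hyu) (hδε x hxs y (hus hyu) hxy)

section Adjoint

open ContinuousLinearMap

variable {𝕜 E F : Type*} [RCLike 𝕜] [NormedAddCommGroup E] [InnerProductSpace 𝕜 E]
  [CompleteSpace E] [NormedAddCommGroup F] [InnerProductSpace 𝕜 F] [CompleteSpace F]

theorem ContinuousLinearMap.norm_adjoint_apply_sq_le (K : E →L[𝕜] F) (x : F) :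
    ‖adjoint K x‖ ^ 2 ≤ ‖x‖ * ‖K (adjoint K x)‖ := by
  rw [apply_norm_sq_eq_inner_adjoint_left, adjoint_adjoint, inner_re_symm]
  exact (RCLike.re_le_norm _).trans (norm_inner_le_norm _ _)

theorem IsCompactOperator.adjoint {K : E →L[𝕜] F} (hK : IsCompactOperator K) :
    IsCompactOperator (ContinuousLinearMap.adjoint K) := by
  set A := ContinuousLinearMap.adjoint K
  set B : Set F := Metric.closedBall 0 1
  have hKB : TotallyBounded ((K ∘L A) '' B) := by
    obtain ⟨C, hC, hKC⟩ := hK.image_subset_compact_of_bounded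
      (A.lipschitz.isBounded_image Metric.isBounded_closedBall)
    exact hC.totallyBounded.subset (by rw [coe_comp, Set.image_comp]; exact hKC)
  -- On `B`, `‖A x - A y‖² ≤ 2 ‖K A x - K A y‖`, so `A` inherits total boundedness from `K ∘L A`.
  have hB : TotallyBounded (A '' B) := by
    refine totallyBounded_image_of_forall_dist_lt hKB fun ε hε => ⟨ε ^ 2 / 2, by positivity, ?_⟩
    intro x hx y hy hxy
    have hxy2 : ‖x - y‖ ≤ 2 := by
      have := norm_sub_le x y
      simp only [B, mem_closedBall_zero_iff] at hx hy
      linarith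
    rw [dist_eq_norm, ← map_sub] at hxy ⊢
    refine lt_of_pow_lt_pow_left₀ 2 hε.le ?_
    calc ‖A (x - y)‖ ^ 2 ≤ ‖x - y‖ * ‖K (A (x - y))‖ := K.norm_adjoint_apply_sq_le _
      _ ≤ 2 * ‖K (A (x - y))‖ := by gcongr
      _ < ε ^ 2 := by rw [comp_apply] at hxy; linarith
  exact (isCompactOperator_iff_isCompact_closure_image_closedBall (A : F →ₗ[𝕜] E)
    one_pos).mpr (hB.closure.isCompact_of_isClosed isClosed_closure)

end Adjoint

section StrongConvergence

open ContinuousLinearMap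

variable {𝕜 D E F : Type*} [RCLike 𝕜] [NormedAddCommGroup D] [NormedSpace 𝕜 D]
  [NormedAddCommGroup E] [NormedSpace 𝕜 E] [NormedAddCommGroup F] [NormedSpace 𝕜 F]

theorem ContinuousLinearMap.tendstoUniformlyOn_of_tendsto_apply {ι : Type*} {l : Filter ι}
    {A : ι → E →L[𝕜] F} {A₀ : E →L[𝕜] F} {C : NNReal} (hA : ∀ i, ‖A i‖₊ ≤ C)
    (hAA₀ : ∀ x, Tendsto (fun i => A i x) l (𝓝 (A₀ x))) {S : Set E} (hS : IsCompact S) :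
    TendstoUniformlyOn (fun i => ⇑(A i)) A₀ l S := by
  have hequi : Equicontinuous fun i => ⇑(A i) :=
    (LipschitzWith.uniformEquicontinuous _ C fun i => (A i).lipschitz.weaken (hA i)).equicontinuous
  have hcover : ⋃₀ {S : Set E | IsCompact S} = Set.univ :=
    Set.sUnion_eq_univ_iff.mpr fun x => ⟨{x}, isCompact_singleton, rfl⟩
  have hcompactConv := (EquicontinuousOn.tendsto_uniformOnFun_iff_pi (fun _ h => h) hcover
    (fun S _ => hequi.equicontinuousOn S) l A₀).mpr (tendsto_pi_nhds.mpr hAA₀)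
  exact UniformOnFun.tendsto_iff_tendstoUniformlyOn.mp hcompactConv S hS

theorem ContinuousLinearMap.tendsto_comp_of_isCompactOperator {ι : Type*} {l : Filter ι}
    {A : ι → E →L[𝕜] F} {A₀ : E →L[𝕜] F} {C : NNReal} (hA : ∀ i, ‖A i‖₊ ≤ C)
    (hAA₀ : ∀ x, Tendsto (fun i => A i x) l (𝓝 (A₀ x))) {K : D →L[𝕜] E}
    (hK : IsCompactOperator K) :
    Tendsto (fun i => (A i).comp K) l (𝓝 (A₀.comp K)) := by
  obtain ⟨S, hS, hKS⟩ := hK.image_closedBall_subset_compact (r := 1)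
  have hunif := Metric.tendstoUniformlyOn_iff.mp (tendstoUniformlyOn_of_tendsto_apply hA hAA₀ hS)
  refine Metric.tendsto_nhds.mpr fun ε hε => ?_
  filter_upwards [hunif (ε / 2) (half_pos hε)] with i hi
  rw [dist_eq_norm]
  refine (opNorm_le_of_unit_norm (half_pos hε).le fun x hx => ?_).trans_lt (half_lt_self hε)
  rw [sub_apply, comp_apply, comp_apply, ← dist_eq_norm, dist_comm]
  exact (hi _ (hKS ⟨x, by simp [hx], rfl⟩)).le

theorem Continuous.clm_comp_of_isCompactOperator {α : Type*} [TopologicalSpace α]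
    {A : α → E →L[𝕜] F} {C : NNReal} (hA : ∀ a, ‖A a‖₊ ≤ C)
    (hAs : ∀ x, Continuous fun a => A a x) {K : α → D →L[𝕜] E} (hK : Continuous K)
    (hKc : ∀ a, IsCompactOperator (K a)) :
    Continuous fun a => (A a).comp (K a) := by
  refine continuous_iff_continuousAt.mpr fun a₀ => ?_
  have hsmall : Tendsto (fun a => (A a).comp (K a - K a₀)) (𝓝 a₀) (𝓝 0) := by
    refine squeeze_zero_norm (fun a => (opNorm_comp_le _ _).trans
      (mul_le_mul_of_nonneg_right (hA a) (norm_nonneg _))) ?_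
    simpa using ((hK.tendsto a₀).sub_const (K a₀)).norm.const_mul (C : ℝ)
  have hfixed := tendsto_comp_of_isCompactOperator hA (fun x => (hAs x).tendsto a₀) (hKc a₀)
  simpa only [ContinuousAt, ← comp_add, sub_add_cancel, zero_add] using hsmall.add hfixed

end StrongConvergence

theorem continuous_mul_star_of_isCompactOperator {𝕜 E α : Type*} [RCLike 𝕜]
    [NormedAddCommGroup E] [InnerProductSpace 𝕜 E] [CompleteSpace E] [TopologicalSpace α]
    {A : α → E →L[𝕜] E} {C : NNReal} (hA : ∀ a, ‖A a‖₊ ≤ C)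
    (hAs : ∀ x, Continuous fun a => A a x) {K : α → E →L[𝕜] E} (hK : Continuous K)
    (hKc : ∀ a, IsCompactOperator (K a)) :
    Continuous fun a => K a * star (A a) := by
  have hKc' : ∀ a, IsCompactOperator ⇑(star (K a)) := fun a => by
    rw [ContinuousLinearMap.star_eq_adjoint]
    exact (hKc a).adjoint
  simpa only [← ContinuousLinearMap.mul_def, star_mul, star_star] using
    (hK.star.clm_comp_of_isCompactOperator hA hAs hKc').star

section UnitaryConjugation

variable {G H : Type*} [Group G] [NormedAddCommGroup H] [InnerProductSpace ℂ H]
  [CompleteSpace H] (u : G →* unitary (H →L[ℂ] H))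

theorem conjU_eq_conjStarAlgAut (g : G) (T : H →L[ℂ] H) :
    conjU u g T = Unitary.conjStarAlgAut ℂ _ (u g) T := by
  rw [conjU, Unitary.conjStarAlgAut_apply, map_inv, ← Unitary.star_eq_inv, Unitary.coe_star]

theorem norm_conjU (g : G) (T : H →L[ℂ] H) : ‖conjU u g T‖ = ‖T‖ := by
  rw [conjU, CStarRing.norm_mul_coe_unitary, CStarRing.norm_coe_unitary_mul]

theorem isCompactOperator_conjU {T : H →L[ℂ] H} (hT : IsCompactOperator T) (g : G) :
    IsCompactOperator (conjU u g T) :=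
  (hT.clm_comp _).comp_clm _

theorem nnnorm_coe_unitary_le_one (U : unitary (H →L[ℂ] H)) : ‖(U : H →L[ℂ] H)‖₊ ≤ 1 := by
  rw [← NNReal.coe_le_coe, coe_nnnorm, NNReal.coe_one, ← mul_one (U : H →L[ℂ] H),
    CStarRing.norm_coe_unitary_mul]
  exact ContinuousLinearMap.norm_id_le

theorem continuous_conjU [TopologicalSpace G]
    (hu : ∀ v : H, Continuous fun g : G => (u g : H →L[ℂ] H) v) {F : G → H →L[ℂ] H}
    (hF : Continuous F) (hFc : ∀ g, IsCompactOperator (F g)) :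
    Continuous fun g => conjU u g (F g) := by
  have hbound : ∀ g, ‖(u g : H →L[ℂ] H)‖₊ ≤ 1 := fun g => nnnorm_coe_unitary_le_one (u g)
  have hright : Continuous fun g => F g * star (u g : H →L[ℂ] H) :=
    continuous_mul_star_of_isCompactOperator hbound hu hF hFc
  simpa only [conjU_eq_conjStarAlgAut, Unitary.conjStarAlgAut_apply, mul_assoc,
    ← ContinuousLinearMap.mul_def] using
    hright.clm_comp_of_isCompactOperator hbound hu fun g => (hFc g).comp_clm _

end UnitaryConjugation

theorem C0smul_C0smul_inv {G X : Type*} [Group G] [TopologicalSpace G] [TopologicalSpace X]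
    [MulAction G X] [ContinuousSMul G X] (g : G) (φ : C₀(X, ℂ)) :
    C0smul g (C0smul g⁻¹ φ) = φ := by
  ext x
  simp [C0smul, smul_smul]

section InC0GK

variable {G H : Type*} [Group G] [TopologicalSpace G] [NormedAddCommGroup H]
  [InnerProductSpace ℂ H] {F : G → H →L[ℂ] H}

theorem InC0GK.comp_inv [ContinuousInv G] (hF : InC0GK F) : InC0GK fun g => F g⁻¹ :=
  ⟨hF.1.comp continuous_inv, fun g => hF.2.1 g⁻¹,
    hF.2.2.comp (Homeomorph.inv G).toCocompactMap.cocompact_tendsto'⟩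

theorem InC0GK.conjU [CompleteSpace H] (u : G →* unitary (H →L[ℂ] H))
    (hu : ∀ v : H, Continuous fun g : G => (u g : H →L[ℂ] H) v) (hF : InC0GK F) :
    InC0GK fun g => conjU u g (F g) :=
  ⟨continuous_conjU u hu hF.1 hF.2.1, fun g => isCompactOperator_conjU u (hF.2.1 g) g,
    by simpa only [norm_conjU] using hF.2.2⟩

end InC0GK

theorem statement_9_general
    (u : G →* unitary (H →L[ℂ] H))
    (hu : ∀ v : H, Continuous fun g : G => (u g : H →L[ℂ] H) v)
    (π : C₀(X, ℂ) →⋆ₙₐ[ℂ] (H →L[ℂ] H))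
    (hcov : ∀ (g : G) (φ : C₀(X, ℂ)),
      (u g : H →L[ℂ] H) * π φ * ((u g⁻¹ : unitary (H →L[ℂ] H)) : H →L[ℂ] H) = π (C0smul g φ))
    (T : H →L[ℂ] H)
    (hT : ∀ φ : C₀(X, ℂ),
      InC0GK (fun g : G => π (C0smul g φ) * T - T * π (C0smul g φ)))
    (φ : C₀(X, ℂ)) :
    InC0GK (fun g : G => π φ * conjU u g T - conjU u g T * π φ) := by
  have hcomm : ∀ g : G, π φ * conjU u g T - conjU u g T * π φ =
      conjU u g (π (C0smul g⁻¹ φ) * T - T * π (C0smul g⁻¹ φ)) := by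
    intro g
    have hπ : conjU u g (π (C0smul g⁻¹ φ)) = π φ := by
      rw [conjU, hcov, C0smul_C0smul_inv]
    simp only [conjU_eq_conjStarAlgAut] at hπ ⊢
    rw [map_sub, map_mul, map_mul, hπ]
  simpa only [hcomm] using ((hT φ).comp_inv).conjU u hu

theorem statement_9
    (u : G →* unitary (H →L[ℂ] H))
    (hu : ∀ v : H, Continuous fun g : G => (u g : H →L[ℂ] H) v)
    (π : C₀(X, ℂ) →⋆ₙₐ[ℂ] (H →L[ℂ] H))
    (hπnd : Dense (Submodule.span ℂ (Set.range fun p : C₀(X, ℂ) × H => π p.1 p.2) : Set H))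
    (hcov : ∀ (g : G) (φ : C₀(X, ℂ)),
      (u g : H →L[ℂ] H) * π φ * ((u g⁻¹ : unitary (H →L[ℂ] H)) : H →L[ℂ] H) = π (C0smul g φ))
    (hproper : IsProperMap fun p : G × X => (p.1 • p.2, p.2))
    (T : H →L[ℂ] H)
    (hT : ∀ φ : C₀(X, ℂ),
      InC0GK (fun g : G => π (C0smul g φ) * T - T * π (C0smul g φ)))
    (φ : C₀(X, ℂ)) :
    InC0GK (fun g : G => π φ * conjU u g T - conjU u g T * π φ) :=
  statement_9_general u hu π hcov T hT φ

end
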